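/- Let T = (V, E; f, g) be a weighted tree with n > 1 vertices, let u be a pendant (degree-one) vertex of T with pendant edge e = (u, v), and let T' = (V∖{u}, E∖{e}; f', g') be the weighted tree with f'(v) = f(v)(f(u)g(e) + 1), f'(w) = f(w) for all w ≠ v, and g' the restriction of g. Then for every vertex w ≠ u of T, F(T; f, g; w) = F(T'; f', g'; w). -/

import Mathlib

open SimpleGraph

/-- `S` is the vertex set of a subtree of `G`: a nonempty set of vertices
whose induced subgraph is connected. -/
def SimpleGraph.IsSubtree {V : Type*} (G : SimpleGraph V) (S : Finset V) : Prop :=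
  S.Nonempty ∧ (G.induce (S : Set V)).Connected

/-- `χ(G)`: the number of subtrees of `G`. -/
noncomputable def SimpleGraph.subtreeCount {V : Type*} (G : SimpleGraph V) : ℕ :=
  Nat.card {S : Finset V // G.IsSubtree S}

/-- The weight of a subtree with vertex set `S`: the product of the weights of its
vertices times the product of the weights of the edges of `G` joining two vertices
of `S`. -/
noncomputable def SimpleGraph.subtreeWeight {V R : Type*} [CommRing R]
    (G : SimpleGraph V) (f : V → R) (g : Sym2 V → R) (S : Finset V) : R :=
  (∏ v ∈ S, f v) * ∏ᶠ e ∈ {e : Sym2 V | e ∈ G.edgeSet ∧ ∀ x ∈ e, x ∈ S}, g e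

/-- `F(G; f, g)`: the sum of the weights of all subtrees of `G`. -/
noncomputable def SimpleGraph.subtreeSum {V R : Type*} [CommRing R]
    (G : SimpleGraph V) (f : V → R) (g : Sym2 V → R) : R :=
  ∑ᶠ S ∈ {S : Finset V | G.IsSubtree S}, G.subtreeWeight f g S

/-- `F(G; f, g; w)`: the sum of the weights of all subtrees of `G` containing `w`. -/
noncomputable def SimpleGraph.subtreeSumAt {V R : Type*} [CommRing R]
    (G : SimpleGraph V) (f : V → R) (g : Sym2 V → R) (w : V) : R :=
  ∑ᶠ S ∈ {S : Finset V | G.IsSubtree S ∧ w ∈ S}, G.subtreeWeight f g S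

/-- `F(G; f, g; w₁, w₂)`: the sum of the weights of all subtrees of `G` containing
both `w₁` and `w₂`. -/
noncomputable def SimpleGraph.subtreeSumAt2 {V R : Type*} [CommRing R]
    (G : SimpleGraph V) (f : V → R) (g : Sym2 V → R) (w₁ w₂ : V) : R :=
  ∑ᶠ S ∈ {S : Finset V | G.IsSubtree S ∧ w₁ ∈ S ∧ w₂ ∈ S}, G.subtreeWeight f g S

/-!
Split the subtrees through `w` according to whether they contain the leaf `u`. A subtree that
contains `u` and `w ≠ u` also contains `v`, and deleting `u` is a bijection onto the subtrees
through `w` and `v` that avoid `u`, which strips the factor `f u * g s(u, v)` off the weight. The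
subtrees of `T` avoiding `u` are exactly the subtrees of `T'`, and the new weight `f' v` contributes
the extra factor `f u * g s(u, v) + 1` precisely when the subtree contains `v`. Writing `A` and
`B` for the total weight of the subtrees avoiding `u` that contain `w`, resp. `w` and `v`, both
sides therefore equal `A + f u * g s(u, v) * B`.
-/

lemma finsum_mem_setOf_split {α M : Type*} [AddCommMonoid M] [Finite α] (p q : α → Prop)
    (φ : α → M) :
    ∑ᶠ a ∈ {a | p a}, φ a =
      ∑ᶠ a ∈ {a | p a ∧ q a}, φ a + ∑ᶠ a ∈ {a | p a ∧ ¬q a}, φ a :=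
  (finsum_mem_inter_add_sdiff {a | q a} (Set.toFinite _)).symm

lemma finsum_mem_ite_add_one_mul {α R : Type*} [CommRing R] [Finite α] (p q : α → Prop)
    [DecidablePred q] (c : R) (φ : α → R) :
    ∑ᶠ a ∈ {a | p a}, (if q a then c + 1 else 1) * φ a =
      c * ∑ᶠ a ∈ {a | p a ∧ q a}, φ a + ∑ᶠ a ∈ {a | p a}, φ a := by
  have hq : ∑ᶠ a ∈ {a | p a ∧ q a}, (if q a then c + 1 else 1) * φ a =
      c * ∑ᶠ a ∈ {a | p a ∧ q a}, φ a + ∑ᶠ a ∈ {a | p a ∧ q a}, φ a := by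
    rw [mul_finsum_mem' _ _ (Set.toFinite _), ← finsum_mem_add_distrib (Set.toFinite _)]
    exact finsum_mem_congr rfl fun a ha => by rw [if_pos ha.2, add_one_mul]
  have hnq : ∑ᶠ a ∈ {a | p a ∧ ¬q a}, (if q a then c + 1 else 1) * φ a =
      ∑ᶠ a ∈ {a | p a ∧ ¬q a}, φ a :=
    finsum_mem_congr rfl fun a ha => by rw [if_neg ha.2, one_mul]
  rw [finsum_mem_setOf_split p q, hq, hnq, finsum_mem_setOf_split p q φ, add_assoc]

namespace SimpleGraph

variable {V R : Type*} [CommRing R] {G : SimpleGraph V}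

lemma neighborSet_eq_singleton_of_degree_eq_one {u v : V} [Fintype (G.neighborSet u)]
    (hdeg : G.degree u = 1) (hadj : G.Adj u v) : G.neighborSet u = {v} := by
  obtain ⟨x, -, hx⟩ := degree_eq_one_iff_existsUnique_adj.mp hdeg
  ext z
  exact ⟨fun hz => (hx z hz).trans (hx v hadj).symm, fun hz => hz ▸ hadj⟩

noncomputable def induceInduceIso (s : Set V) (t : Set s) :
    (G.induce s).induce t ≃g G.induce (Subtype.val '' t) where
  toEquiv := Equiv.Set.image Subtype.val t Subtype.val_injective
  map_rel_iff' := Iff.rfl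

lemma subtreeWeight_mul_left (f h : V → R) (g : Sym2 V → R) (S : Finset V) :
    G.subtreeWeight (fun x => f x * h x) g S = (∏ x ∈ S, h x) * G.subtreeWeight f g S := by
  rw [subtreeWeight, subtreeWeight, Finset.prod_mul_distrib]
  ring

section Leaf

lemma IsSubtree.mem_of_mem_leaf {S : Finset V} {u v w : V} (hS : G.IsSubtree S)
    (hu : G.neighborSet u ⊆ {v}) (huS : u ∈ S) (hwS : w ∈ S) (hwu : w ≠ u) : v ∈ S := by
  obtain ⟨p⟩ := hS.2.preconnected ⟨u, huS⟩ ⟨w, hwS⟩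
  have hadj := p.adj_snd (Walk.not_nil_of_ne (by simpa using hwu.symm))
  have hv : p.snd.1 = v := hu (induce_adj.mp hadj)
  exact hv ▸ p.snd.2

variable [DecidableEq V]

lemma IsSubtree.insert_of_adj {S : Finset V} {u v : V} (hS : G.IsSubtree S) (hadj : G.Adj u v)
    (hvS : v ∈ S) : G.IsSubtree (insert u S) := by
  refine ⟨Finset.insert_nonempty u S, ?_⟩
  have hcoe : ((insert u S : Finset V) : Set V) = (S : Set V) ∪ {u, v} := by
    ext x
    simp only [Finset.coe_insert, Set.mem_insert_iff, Finset.mem_coe]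
    grind
  rw [hcoe]
  exact induce_union_connected hS.2.preconnected
    (induce_pair_connected_of_adj hadj).preconnected ⟨v, hvS, by simp⟩

lemma IsSubtree.erase_of_subsingleton {S : Finset V} {u : V} (hS : G.IsSubtree S)
    (hu : (G.neighborSet u).Subsingleton) (hne : (S.erase u).Nonempty) :
    G.IsSubtree (S.erase u) := by
  refine ⟨hne, ?_⟩
  have hpre := hS.2.preconnected.induce_of_degree_eq_one (s := {x | x.1 ≠ u}) fun x hx => by
    intro a ha b hb
    have hxu : x.1 = u := not_not.mp hx
    exact Subtype.ext (hu (hxu ▸ induce_adj.mp ha) (hxu ▸ induce_adj.mp hb))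
  have himage : Subtype.val '' {x : (S : Set V) | x.1 ≠ u} = (S.erase u : Set V) := by
    ext x
    simp [and_comm]
  rw [← himage, connected_iff]
  exact ⟨(induceInduceIso _ _).preconnected_iff.mp hpre, himage ▸ hne.coe_sort⟩

lemma edgeSet_within_insert_leaf {S : Finset V} {u v : V} (hu : G.neighborSet u = {v})
    (hvS : v ∈ S) :
    {e : Sym2 V | e ∈ G.edgeSet ∧ ∀ x ∈ e, x ∈ insert u S} =
      insert s(u, v) {e : Sym2 V | e ∈ G.edgeSet ∧ ∀ x ∈ e, x ∈ S} := by
  have hadj : ∀ z, G.Adj u z ↔ z = v := fun z => Set.ext_iff.mp hu z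
  ext e
  induction e using Sym2.ind with
  | h a b =>
    simp only [Finset.mem_insert, Set.mem_ofPred_eq, mem_edgeSet, Sym2.mem_iff, forall_eq_or_imp,
      forall_eq, Set.mem_insert_iff, Sym2.eq, Sym2.rel_iff', Prod.mk.injEq, Prod.swap_prod_mk]
    have := hadj a
    have := hadj b
    have := G.adj_comm a b
    grind

lemma subtreeWeight_insert_leaf (f : V → R) (g : Sym2 V → R) {S : Finset V} {u v : V}
    (hu : G.neighborSet u = {v}) (huS : u ∉ S) (hvS : v ∈ S) :
    G.subtreeWeight f g (insert u S) = f u * g s(u, v) * G.subtreeWeight f g S := by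
  have hnew : s(u, v) ∉ {e : Sym2 V | e ∈ G.edgeSet ∧ ∀ x ∈ e, x ∈ S} :=
    fun he => huS (he.2 u (Sym2.mem_mk_left u v))
  rw [subtreeWeight, subtreeWeight, Finset.prod_insert huS, edgeSet_within_insert_leaf hu hvS,
    finprod_mem_insert g hnew
      (S.sym2.finite_toSet.subset fun e he => Finset.mem_sym2_iff.mpr he.2)]
  ring

lemma finsum_subtreeWeight_mem_leaf [Finite V] (f : V → R) (g : Sym2 V → R) {u v w : V}
    (hu : G.neighborSet u = {v}) (hw : w ≠ u) :
    ∑ᶠ S ∈ {S | G.IsSubtree S ∧ w ∈ S ∧ u ∈ S}, G.subtreeWeight f g S =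
      f u * g s(u, v) * ∑ᶠ S ∈ {S | G.IsSubtree S ∧ w ∈ S ∧ u ∉ S ∧ v ∈ S},
        G.subtreeWeight f g S := by
  have hadj : G.Adj u v := (Set.ext_iff.mp hu v).mpr rfl
  have hvS {S : Finset V} (hS : G.IsSubtree S) (hwS : w ∈ S) (huS : u ∈ S) : v ∈ S.erase u :=
    Finset.mem_erase.mpr ⟨(G.ne_of_adj hadj).symm, hS.mem_of_mem_leaf hu.subset huS hwS hw⟩
  rw [mul_finsum_mem' _ _ (Set.toFinite _)]
  refine finsum_mem_eq_of_bijOn (Finset.erase · u) (Set.InvOn.bijOn (f' := insert u) ?_ ?_ ?_) ?_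
  · exact ⟨fun S hS => Finset.insert_erase hS.2.2, fun S hS => Finset.erase_insert hS.2.2.1⟩
  · rintro S ⟨hS, hwS, huS⟩
    have hwS' : w ∈ S.erase u := Finset.mem_erase.mpr ⟨hw, hwS⟩
    exact ⟨hS.erase_of_subsingleton (hu ▸ Set.subsingleton_singleton) ⟨w, hwS'⟩, hwS',
      Finset.notMem_erase u S, hvS hS hwS huS⟩
  · rintro S ⟨hS, hwS, -, hvS⟩
    exact ⟨hS.insert_of_adj hadj hvS, Finset.mem_insert_of_mem hwS, Finset.mem_insert_self u S⟩
  · rintro S ⟨hS, hwS, huS⟩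
    conv_lhs => rw [← Finset.insert_erase huS]
    exact subtreeWeight_insert_leaf f g hu (Finset.notMem_erase u S) (hvS hS hwS huS)

end Leaf

section Induce

variable {s : Set V}

lemma isSubtree_induce_iff (T : Finset s) :
    (G.induce s).IsSubtree T ↔ G.IsSubtree (T.map (Function.Embedding.subtype _)) := by
  rw [IsSubtree, IsSubtree, Finset.map_nonempty, Finset.coe_map]
  exact and_congr_right' (induceInduceIso s T).connected_iff

lemma image_edgeSet_within_induce (T : Finset s) :
    Sym2.map Subtype.val '' {e | e ∈ (G.induce s).edgeSet ∧ ∀ x ∈ e, x ∈ T} =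
      {e | e ∈ G.edgeSet ∧ ∀ x ∈ e, x ∈ T.map (Function.Embedding.subtype _)} := by
  ext e
  constructor
  · rintro ⟨e', ⟨he', hT⟩, rfl⟩
    induction e' using Sym2.ind with
    | h a b =>
      refine ⟨he', fun x hx => ?_⟩
      rw [Sym2.map_mk, Sym2.mem_iff] at hx
      rcases hx with rfl | rfl
      · exact Finset.mem_map_of_mem _ (hT a (Sym2.mem_mk_left a b))
      · exact Finset.mem_map_of_mem _ (hT b (Sym2.mem_mk_right a b))
  · induction e using Sym2.ind with
    | h a b =>
      rintro ⟨hab, hT⟩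
      obtain ⟨a', ha', rfl⟩ := Finset.mem_map.mp (hT a (Sym2.mem_mk_left a b))
      obtain ⟨b', hb', rfl⟩ := Finset.mem_map.mp (hT b (Sym2.mem_mk_right _ b))
      refine ⟨s(a', b'), ⟨hab, fun x hx => ?_⟩, rfl⟩
      rcases Sym2.mem_iff.mp hx with rfl | rfl <;> assumption

lemma subtreeWeight_induce (f : V → R) (g : Sym2 V → R) (T : Finset s) :
    (G.induce s).subtreeWeight (fun x => f x) (fun e => g (e.map Subtype.val)) T =
      G.subtreeWeight f g (T.map (Function.Embedding.subtype _)) := by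
  rw [subtreeWeight, subtreeWeight, Finset.prod_map, ← image_edgeSet_within_induce,
    finprod_mem_image (Sym2.map.injective Subtype.val_injective).injOn]
  rfl

lemma subtreeSumAt_induce (s : Set V) (f : V → R) (g : Sym2 V → R) (x : s) :
    (G.induce s).subtreeSumAt (fun y => f y) (fun e => g (e.map Subtype.val)) x =
      ∑ᶠ S ∈ {S : Finset V | G.IsSubtree S ∧ (x : V) ∈ S ∧ ∀ y ∈ S, y ∈ s},
        G.subtreeWeight f g S := by
  classical
  refine finsum_mem_eq_of_bijOn (Finset.map (Function.Embedding.subtype _))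
    ⟨?_, (Finset.map_injective _).injOn, ?_⟩ fun T _ => subtreeWeight_induce f g T
  · rintro T ⟨hT, hxT⟩
    refine ⟨(isSubtree_induce_iff T).mp hT, Finset.mem_map_of_mem _ hxT, fun y hy => ?_⟩
    obtain ⟨z, -, rfl⟩ := Finset.mem_map.mp hy
    exact z.2
  · rintro S ⟨hS, hxS, hSs⟩
    have hmap := Finset.subtype_map_of_mem hSs
    refine ⟨S.subtype (· ∈ s), ⟨(isSubtree_induce_iff _).mpr (by rwa [hmap]), ?_⟩, hmap⟩
    exact Finset.mem_subtype.mpr hxS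

end Induce

end SimpleGraph

theorem subtreeSumAt_pendant_contraction_general {V R : Type*} [Fintype V] [DecidableEq V]
    [CommRing R] (G : SimpleGraph V) [DecidableRel G.Adj]
    (u v : V) (hdeg : G.degree u = 1) (hadj : G.Adj u v) (hvu : v ≠ u)
    (f : V → R) (g : Sym2 V → R)
    (f' : {w : V // w ≠ u} → R)
    (hf'v : f' ⟨v, hvu⟩ = f v * (f u * g s(u, v) + 1))
    (hf'other : ∀ w : {w : V // w ≠ u}, (w : V) ≠ v → f' w = f (w : V))
    (w : V) (hw : w ≠ u) :
    G.subtreeSumAt f g w =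
      (G.induce {w : V | w ≠ u}).subtreeSumAt f' (fun e => g (e.map Subtype.val))
        ⟨w, hw⟩ := by
  set F : V → R := fun y => f y * Pi.mulSingle (M := fun _ => R) v (f u * g s(u, v) + 1) y
    with hF
  have hf' : f' = fun x : {w : V // w ≠ u} => F x := by
    funext x
    simp only [hF]
    by_cases hx : (x : V) = v
    · obtain rfl : x = ⟨v, hvu⟩ := Subtype.ext hx
      rw [Pi.mulSingle_eq_same, hf'v]
    · rw [Pi.mulSingle_eq_of_ne hx, mul_one, hf'other x hx]
  have hB : {S : Finset V | G.IsSubtree S ∧ w ∈ S ∧ ∀ y ∈ S, y ∈ {w | w ≠ u}} =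
      {S | G.IsSubtree S ∧ w ∈ S ∧ u ∉ S} := by
    ext S
    simp only [Set.mem_ofPred_eq, Finset.forall_mem_not_eq']
  rw [hf']
  refine Eq.trans ?_ (subtreeSumAt_induce _ F g _).symm
  rw [subtreeSumAt, finsum_mem_setOf_split _ (u ∈ ·)]
  simp only [and_assoc, hB, hF, subtreeWeight_mul_left, Finset.prod_pi_mulSingle']
  rw [finsum_subtreeWeight_mem_leaf f g (neighborSet_eq_singleton_of_degree_eq_one hdeg hadj) hw,
    finsum_mem_ite_add_one_mul]
  simp only [and_assoc]

/-- Pendant contraction for the subtree generating function rooted at a vertex.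
With `T'` the weighted tree obtained from `T` by deleting the pendant vertex `u`
(with pendant edge `(u,v)`) and reweighting `v` by `f' v = f v * (f u * g s(u,v) + 1)`,
we have `F(T; f, g; w) = F(T'; f', g'; w)` for every vertex `w ≠ u`. -/
theorem subtreeSumAt_pendant_contraction {V R : Type*} [Fintype V] [DecidableEq V]
    [CommRing R] (G : SimpleGraph V) [DecidableRel G.Adj]
    (hG : G.IsTree) (hn : 1 < Fintype.card V)
    (u v : V) (hdeg : G.degree u = 1) (hadj : G.Adj u v) (hvu : v ≠ u)
    (f : V → R) (g : Sym2 V → R)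
    (f' : {w : V // w ≠ u} → R)
    (hf'v : f' ⟨v, hvu⟩ = f v * (f u * g s(u, v) + 1))
    (hf'other : ∀ w : {w : V // w ≠ u}, (w : V) ≠ v → f' w = f (w : V))
    (w : V) (hw : w ≠ u) :
    G.subtreeSumAt f g w =
      (G.induce {w : V | w ≠ u}).subtreeSumAt f' (fun e => g (e.map Subtype.val))
        ⟨w, hw⟩ :=
  subtreeSumAt_pendant_contraction_general G u v hdeg hadj hvu f g f' hf'v hf'other w hw
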